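/- arXiv:2304.09598 — 3 statements merged into one kernel-verified Lean document; each statement's English description precedes it below -/
import Mathlib

section
/- If α is a simple multisegment, α ≤ β, and L_α = L_β, then α = β. -/
/-- A segment `[b, e]` is the set of consecutive integers `{b, b+1, ..., e}`,
recorded as the pair `(b, e)` of its base `b` and end `e`. -/
abbrev Segment : Type := ℤ × ℤ

/-- A multisegment is a finite multiset of segments. -/
abbrev Multisegment : Type := Multiset Segment

/-- The length `e - b + 1` of the segment `[b, e]`. -/
def Segment.len (Δ : Segment) : ℤ := Δ.2 - Δ.1 + 1

/-- `[b₁,e₁]` precedes `[b₂,e₂]` iff `b₁ < b₂`, `e₁ < e₂` and `b₂ ≤ e₁ + 1`. -/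
def Precedes (Δ₁ Δ₂ : Segment) : Prop :=
  Δ₁.1 < Δ₂.1 ∧ Δ₁.2 < Δ₂.2 ∧ Δ₂.1 ≤ Δ₁.2 + 1

instance (Δ₁ Δ₂ : Segment) : Decidable (Precedes Δ₁ Δ₂) := by
  unfold Precedes; infer_instance

/-- Every member of a multisegment is a genuine (nonempty) segment. -/
def IsMultisegment (α : Multisegment) : Prop := ∀ Δ ∈ α, Δ.1 ≤ Δ.2

/-- The rank `r_{i,j}`: the number of segments `[k,l]` of `α` with `k ≤ i` and `j ≤ l`. -/
def rank (α : Multisegment) (i j : ℤ) : ℕ :=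
  (α.filter fun Δ => Δ.1 ≤ i ∧ j ≤ Δ.2).card

/-- `n_α`: the number of segments of `α`, counted with multiplicity. -/
def nSeg (α : Multisegment) : ℕ := Multiset.card α

instance : Std.Commutative (fun a b : ℤ => max a b) := ⟨max_comm⟩
instance : Std.Associative (fun a b : ℤ => max a b) := ⟨max_assoc⟩

/-- `L_α`: the length of the longest segment of `α` (0 for the empty multisegment). -/
def Lmax (α : Multisegment) : ℤ := (α.map Segment.len).fold (fun a b => max a b) 0

/-- The support `∪_{Δ ∈ α} Δ` of a multisegment, as a finite set of integers. -/
noncomputable def supp (α : Multisegment) : Finset ℤ := α.toFinset.biUnion fun Δ => Finset.Icc Δ.1 Δ.2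

/-- `S_α`: the number of integers in `∪_{Δ ∈ α} Δ`. -/
noncomputable def Ssize (α : Multisegment) : ℕ := (supp α).card

/-- `c_α`: the number of interval components of `∪_{Δ ∈ α} Δ`
(counted via their left endpoints). -/
noncomputable def comp (α : Multisegment) : ℕ :=
  ((supp α).filter fun x => x - 1 ∉ supp α).card

/-! ### The Mœglin–Waldspurger algorithm -/

/-- Remove the end value from a segment, dropping it if it becomes empty. -/
def removeEnd (Δ : Segment) : Option Segment :=
  if Δ.1 ≤ Δ.2 - 1 then some (Δ.1, Δ.2 - 1) else none

/-- Among the segments of `l` with end value `m`, pick a shortest one (if any). -/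
def pickShortest (m : ℤ) (l : List Segment) : Option Segment :=
  (l.filter fun Δ => Δ.2 == m).foldl (fun acc Δ =>
    match acc with
    | none => some Δ
    | some Δ' => if Δ'.1 < Δ.1 then some Δ else some Δ') none

/-- Starting from a current segment `Δ`, greedily build the Mœglin–Waldspurger chain:
at each step choose a shortest segment preceding the current one whose end value is one
less.  Returns the chosen chain together with the unchosen segments. -/
def pickChain : ℕ → Segment → List Segment → List Segment × List Segment
  | 0, Δ, rest => ([Δ], rest)
  | n + 1, Δ, rest =>
    match pickShortest (Δ.2 - 1) (rest.filter fun Δ' => decide (Precedes Δ' Δ)) with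
    | none => ([Δ], rest)
    | some Δ' =>
      let p := pickChain n Δ' (rest.erase Δ')
      (Δ :: p.1, p.2)

/-- One iteration of the Mœglin–Waldspurger algorithm: returns the produced dual
segment `[m, e]` together with the multisegment `α'` left after removing the chosen
end values. -/
def mwIter (l : List Segment) : Option (Segment × List Segment) :=
  match (l.map fun Δ => Δ.2).max? with
  | none => none
  | some e =>
    match pickShortest e l with
    | none => none
    | some Δe =>
      let p := pickChain l.length Δe (l.erase Δe)
      some ((Δe.2 - ((p.1.length : ℤ) - 1), e), p.2 ++ p.1.filterMap removeEnd)

/-- The total number of integers (with multiplicity) in a list of segments. -/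
def totalSize (l : List Segment) : ℕ := (l.map fun Δ => (Δ.2 - Δ.1 + 1).toNat).sum

/-- Fueled iteration of the Mœglin–Waldspurger algorithm. -/
def mwAux : ℕ → List Segment → List Segment
  | 0, _ => []
  | n + 1, l =>
    match mwIter l with
    | none => []
    | some (Δ', l') => Δ' :: mwAux n l'

/-- The Mœglin–Waldspurger dual `α̃` of a multisegment `α`. -/
noncomputable def dual (α : Multisegment) : Multisegment :=
  (mwAux (totalSize α.toList) α.toList : List Segment)

/-! ### The partial order on multisegments -/

/-- An elementary move on multisegments: either the union–intersection move
(replace distinct overlapping `Δ₁, Δ₂` by `Δ₁ ∩ Δ₂` and `Δ₁ ∪ Δ₂`) or the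
conjunction move (replace two disjoint adjacent segments by their union). -/
inductive MoveStep : Multisegment → Multisegment → Prop
  | unionInter (α : Multisegment) (Δ₁ Δ₂ : Segment)
      (hmeet : max Δ₁.1 Δ₂.1 ≤ min Δ₁.2 Δ₂.2) (hne : Δ₁ ≠ Δ₂) :
      MoveStep (Δ₁ ::ₘ Δ₂ ::ₘ α)
        ((max Δ₁.1 Δ₂.1, min Δ₁.2 Δ₂.2) ::ₘ (min Δ₁.1 Δ₂.1, max Δ₁.2 Δ₂.2) ::ₘ α)
  | conj (α : Multisegment) (Δ₁ Δ₂ : Segment) (h : Δ₂.1 = Δ₁.2 + 1) :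
      MoveStep (Δ₁ ::ₘ Δ₂ ::ₘ α) ((Δ₁.1, Δ₂.2) ::ₘ α)

/-- The partial order `α ≤ β` on multisegments, generated by the elementary moves. -/
def mle (α β : Multisegment) : Prop := Relation.ReflTransGen MoveStep α β

/-- A ladder multisegment: the segments can be listed with strictly increasing
bases and strictly increasing ends. -/
def IsLadder (α : Multisegment) : Prop :=
  ∃ l : List Segment, (l : Multiset Segment) = α ∧
    l.Chain' fun Δ₁ Δ₂ => Δ₁.1 < Δ₂.1 ∧ Δ₁.2 < Δ₂.2

/-- `C_α`: the maximal number of (nonempty) components in a decomposition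
`α = ⊔ᵢ αᵢ` satisfying `α̃ = ⊔ᵢ α̃ᵢ`. -/
noncomputable def Cmax (α : Multisegment) : ℕ :=
  sSup {n | ∃ parts : Multiset Multisegment, Multiset.card parts = n ∧
    (∀ γ ∈ parts, γ ≠ 0) ∧ parts.sum = α ∧ (parts.map dual).sum = dual α}

/-- The simple multisegment `{[b,e], [b+1,e+1], ..., [b+n-1,e+n-1]}`. -/
def simpleMS (b e : ℤ) (n : ℕ) : Multisegment :=
  (Multiset.range n).map fun i => (b + i, e + i)

/-- The symmetric simple multisegment `{[-e,b], [-e+1,b+1], ..., [-b,e]}`. -/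
def symmSimple (b e : ℤ) : Multisegment :=
  (Multiset.range (e - b + 1).toNat).map fun i => (-e + i, b + i)

/-!
All segments of a simple multisegment have the same length `ℓ = e - b + 1 ≥ 1`, so an elementary
move out of it always creates a segment longer than `ℓ`: two distinct segments of equal length
have distinct bases, so their union is strictly longer, and a conjunction of two segments of
length `ℓ` has length `2ℓ`. Elementary moves never decrease `L` on genuine multisegments, so any
`β ≠ α` above `α` has `L_β > L_α`.
-/

lemma Lmax_cons (Δ : Segment) (s : Multisegment) :
    Lmax (Δ ::ₘ s) = max Δ.len (Lmax s) := by
  simp [Lmax, Multiset.fold_cons_left]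

lemma Lmax_le {s : Multisegment} {c : ℤ} (hc : 0 ≤ c) (h : ∀ Δ ∈ s, Δ.len ≤ c) :
    Lmax s ≤ c := by
  induction s using Multiset.induction with
  | empty => simpa [Lmax]
  | cons a t ih =>
    rw [Lmax_cons]
    exact max_le (h a (Multiset.mem_cons_self _ _))
      (ih fun Δ hΔ => h Δ (Multiset.mem_cons_of_mem hΔ))

section MoveStep

variable {γ δ : Multisegment}

lemma MoveStep.isMultisegment (h : MoveStep γ δ) (hγ : IsMultisegment γ) :
    IsMultisegment δ := by
  cases h with
  | unionInter α Δ₁ Δ₂ hmeet =>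
    have h₁ := hγ Δ₁ (by simp)
    intro Δ hΔ
    rcases Multiset.mem_cons.1 hΔ with rfl | hΔ
    · exact hmeet
    rcases Multiset.mem_cons.1 hΔ with rfl | hΔ
    · exact (min_le_left _ _).trans (h₁.trans (le_max_left _ _))
    · exact hγ Δ (by simp [hΔ])
  | conj α Δ₁ Δ₂ hc =>
    have h₁ := hγ Δ₁ (by simp)
    have h₂ := hγ Δ₂ (by simp)
    intro Δ hΔ
    rcases Multiset.mem_cons.1 hΔ with rfl | hΔ
    · dsimp only; omega
    · exact hγ Δ (by simp [hΔ])

lemma MoveStep.Lmax_le (h : MoveStep γ δ) (hγ : IsMultisegment γ) : Lmax γ ≤ Lmax δ := by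
  cases h with
  | unionInter α Δ₁ Δ₂ =>
    simp only [Lmax_cons, Segment.len]
    omega
  | conj α Δ₁ Δ₂ hc =>
    have h₁ := hγ Δ₁ (by simp)
    have h₂ := hγ Δ₂ (by simp)
    simp only [Lmax_cons, Segment.len]
    omega

lemma MoveStep.lt_Lmax_of_forall_len_eq {ℓ : ℤ} (h : MoveStep γ δ) (hγ : IsMultisegment γ)
    (hlen : ∀ Δ ∈ γ, Δ.len = ℓ) : ℓ < Lmax δ := by
  cases h with
  | unionInter α Δ₁ Δ₂ _ hne =>
    have h₁ := hlen Δ₁ (by simp)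
    have h₂ := hlen Δ₂ (by simp)
    have hbase : Δ₁.1 ≠ Δ₂.1 := fun hb =>
      hne (Prod.ext hb (by simp only [Segment.len] at h₁ h₂; omega))
    simp only [Lmax_cons, Segment.len] at *
    omega
  | conj α Δ₁ Δ₂ hc =>
    have h₁ := hlen Δ₁ (by simp)
    have h₂ := hlen Δ₂ (by simp)
    have hΔ₁ := hγ Δ₁ (by simp)
    simp only [Lmax_cons, Segment.len] at *
    omega

end MoveStep

lemma mle.isMultisegment {γ δ : Multisegment} (h : mle γ δ) (hγ : IsMultisegment γ) :
    IsMultisegment δ := by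
  induction h with
  | refl => exact hγ
  | tail _ hstep ih => exact hstep.isMultisegment ih

lemma mle.Lmax_le {γ δ : Multisegment} (h : mle γ δ) (hγ : IsMultisegment γ) :
    Lmax γ ≤ Lmax δ := by
  induction h with
  | refl => exact le_rfl
  | tail hprev hstep ih => exact ih.trans (hstep.Lmax_le (mle.isMultisegment hprev hγ))

lemma len_of_mem_simpleMS {b e : ℤ} {n : ℕ} {Δ : Segment} (h : Δ ∈ simpleMS b e n) :
    Δ.len = e - b + 1 := by
  obtain ⟨i, -, rfl⟩ := Multiset.mem_map.1 h
  simp only [Segment.len]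
  ring

lemma simpleMS_isMultisegment {b e : ℤ} (n : ℕ) (hbe : b ≤ e) :
    IsMultisegment (simpleMS b e n) := by
  intro Δ hΔ
  have := len_of_mem_simpleMS hΔ
  simp only [Segment.len] at this
  omega

theorem stmt9_general (b e : ℤ) (n : ℕ) (hbe : b ≤ e) (β : Multisegment)
    (h : mle (simpleMS b e n) β) (hL : Lmax (simpleMS b e n) = Lmax β) :
    simpleMS b e n = β := by
  rcases Relation.ReflTransGen.cases_head h with rfl | ⟨γ, hstep, hrest⟩
  · rfl
  have hα := simpleMS_isMultisegment n hbe
  have hαγ : e - b + 1 < Lmax γ :=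
    hstep.lt_Lmax_of_forall_len_eq hα fun _ => len_of_mem_simpleMS
  have hγβ : Lmax γ ≤ Lmax β := mle.Lmax_le hrest (hstep.isMultisegment hα)
  have hLα : Lmax (simpleMS b e n) ≤ e - b + 1 :=
    Lmax_le (by omega) fun _ hΔ => (len_of_mem_simpleMS hΔ).le
  omega

/-- if `α` is simple, `α ≤ β` and `L_α = L_β`, then `α = β`. -/
theorem stmt9 (b e : ℤ) (n : ℕ) (hbe : b ≤ e) (hn : 1 ≤ n) (β : Multisegment)
    (h : mle (simpleMS b e n) β) (hL : Lmax (simpleMS b e n) = Lmax β) :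
    simpleMS b e n = β :=
  stmt9_general b e n hbe β h hL
end

section
/- Let α be a simple multisegment. For any multisegment β with α ≤ β and α̃ ≤ β̃ (where ˜ denotes the Mœglin–Waldspurger dual), we have α = β. -/
/-!
The sum `Q` of the squared lengths of the segments never decreases along `≤`, a move that
keeps it fixed is trivial (union–intersection of nested segments), and the total length `T`
is invariant. Each iteration of the Mœglin–Waldspurger algorithm shortens every segment by at
most one, so the longest segment of `β` has length `L_β ≤ |β̃| ≤ |α̃| ≤ e - b + 1`, moves never
increasing the number of segments. Hence
`Q(β) ≤ L_β T(β) ≤ (e - b + 1) · n (e - b + 1) = Q(α) ≤ Q(β)`, which forces `α = β`.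
-/

def lenSum (γ : Multisegment) : ℤ := (γ.map Segment.len).sum

def lenSqSum (γ : Multisegment) : ℤ := (γ.map fun Δ => Δ.len ^ 2).sum

namespace MoveStep

variable {γ δ : Multisegment}

theorem isMultisegment_s10 (h : MoveStep γ δ) (hγ : IsMultisegment γ) : IsMultisegment δ := by
  cases h with
  | unionInter _ Δ₁ Δ₂ hmeet _ =>
    have h₁ := hγ Δ₁ (by simp)
    have h₂ := hγ Δ₂ (by simp)
    intro Δ hΔ
    simp only [Multiset.mem_cons] at hΔ
    rcases hΔ with rfl | rfl | hΔ
    · exact hmeet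
    · dsimp only; omega
    · exact hγ Δ (by simp [hΔ])
  | conj _ Δ₁ Δ₂ h =>
    have h₁ := hγ Δ₁ (by simp)
    have h₂ := hγ Δ₂ (by simp)
    intro Δ hΔ
    rcases Multiset.mem_cons.1 hΔ with rfl | hΔ
    · dsimp only; omega
    · exact hγ Δ (by simp [hΔ])

theorem lenSum_eq (h : MoveStep γ δ) : lenSum δ = lenSum γ := by
  cases h <;> simp only [lenSum, Multiset.map_cons, Multiset.sum_cons, Segment.len] <;> omega

theorem card_le (h : MoveStep γ δ) : Multiset.card δ ≤ Multiset.card γ := by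
  cases h <;> simp

/-- The increase is `2 (ℓ₁ - ℓ∩) (ℓ₂ - ℓ∩)` for a union–intersection move (zero exactly for
nested segments, which the move leaves in place) and `2 ℓ₁ ℓ₂` for a conjunction. -/
theorem eq_or_lenSqSum_lt (h : MoveStep γ δ) (hγ : IsMultisegment γ) :
    γ = δ ∨ lenSqSum γ < lenSqSum δ := by
  cases h with
  | unionInter _ Δ₁ Δ₂ _ _ =>
    obtain ⟨b₁, e₁⟩ := Δ₁
    obtain ⟨b₂, e₂⟩ := Δ₂
    simp only [lenSqSum, Multiset.map_cons, Multiset.sum_cons, Segment.len]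
    have hsum : (min e₁ e₂ - max b₁ b₂) + (max e₁ e₂ - min b₁ b₂) = (e₁ - b₁) + (e₂ - b₂) := by
      omega
    rcases (show min e₁ e₂ - max b₁ b₂ ≤ e₁ - b₁ by omega).eq_or_lt with h₁ | h₁
    · left
      rw [show max b₁ b₂ = b₁ by omega, show min e₁ e₂ = e₁ by omega,
        show min b₁ b₂ = b₂ by omega, show max e₁ e₂ = e₂ by omega]
    rcases (show min e₁ e₂ - max b₁ b₂ ≤ e₂ - b₂ by omega).eq_or_lt with h₂ | h₂
    · left
      rw [show max b₁ b₂ = b₂ by omega, show min e₁ e₂ = e₂ by omega,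
        show min b₁ b₂ = b₁ by omega, show max e₁ e₂ = e₁ by omega, Multiset.cons_swap]
    · right
      nlinarith [mul_pos (sub_pos.2 h₁) (sub_pos.2 h₂)]
  | conj _ Δ₁ Δ₂ h =>
    right
    have h₁ := hγ Δ₁ (by simp)
    have h₂ := hγ Δ₂ (by simp)
    simp only [lenSqSum, Multiset.map_cons, Multiset.sum_cons, Segment.len]
    nlinarith

end MoveStep

namespace mle

variable {γ β : Multisegment}

theorem isMultisegment_s10 (h : mle γ β) (hγ : IsMultisegment γ) : IsMultisegment β := by
  induction h with
  | refl => exact hγ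
  | tail _ hstep ih => exact hstep.isMultisegment_s10 ih

theorem lenSum_eq (h : mle γ β) : lenSum β = lenSum γ := by
  induction h with
  | refl => rfl
  | tail _ hstep ih => exact hstep.lenSum_eq.trans ih

theorem card_le (h : mle γ β) : Multiset.card β ≤ Multiset.card γ := by
  induction h with
  | refl => exact le_rfl
  | tail _ hstep ih => exact hstep.card_le.trans ih

theorem lenSqSum_le (h : mle γ β) (hγ : IsMultisegment γ) : lenSqSum γ ≤ lenSqSum β := by
  induction h with
  | refl => exact le_rfl
  | tail hγδ hstep ih =>
    rcases hstep.eq_or_lenSqSum_lt (isMultisegment_s10 hγδ hγ) with rfl | hlt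
    exacts [ih, ih.trans hlt.le]

theorem eq_of_lenSqSum_le (h : mle γ β) (hγ : IsMultisegment γ)
    (hle : lenSqSum β ≤ lenSqSum γ) : γ = β := by
  induction h with
  | refl => rfl
  | tail hγδ hstep ih =>
    have hδ := isMultisegment_s10 hγδ hγ
    have hγδ' := lenSqSum_le hγδ hγ
    rcases hstep.eq_or_lenSqSum_lt hδ with rfl | hlt
    · exact ih hle
    · exact absurd (hle.trans hγδ') (not_le.2 hlt)

end mle

theorem Lmax_le_iff {s : Multisegment} {c : ℤ} : Lmax s ≤ c ↔ 0 ≤ c ∧ ∀ Δ ∈ s, Δ.len ≤ c := by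
  induction s using Multiset.induction with
  | empty => simp [Lmax]
  | cons Δ s ih =>
    rw [Lmax, Multiset.map_cons, Multiset.fold_cons_left, ← Lmax, max_le_iff, ih]
    simp only [Multiset.mem_cons, forall_eq_or_imp]
    tauto

theorem Lmax_nonneg (s : Multisegment) : 0 ≤ Lmax s :=
  (Lmax_le_iff.1 le_rfl).1

theorem len_le_Lmax {s : Multisegment} {Δ : Segment} (h : Δ ∈ s) : Δ.len ≤ Lmax s :=
  (Lmax_le_iff.1 le_rfl).2 Δ h

theorem lenSum_add (s t : Multisegment) : lenSum (s + t) = lenSum s + lenSum t := by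
  simp [lenSum]

theorem lenSum_nonneg {s : Multisegment} (hs : IsMultisegment s) : 0 ≤ lenSum s :=
  Multiset.sum_nonneg fun _ hx => by
    obtain ⟨Δ, hΔ, rfl⟩ := Multiset.mem_map.1 hx
    have := hs Δ hΔ
    simp only [Segment.len]; omega

theorem Lmax_le_lenSum {s : Multisegment} (hs : IsMultisegment s) : Lmax s ≤ lenSum s := by
  refine Lmax_le_iff.2 ⟨lenSum_nonneg hs, fun Δ hΔ => ?_⟩
  obtain ⟨t, rfl⟩ := Multiset.exists_cons_of_mem hΔ
  have := lenSum_nonneg fun Δ' h' => hs Δ' (Multiset.mem_cons_of_mem h')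
  simp only [lenSum, Multiset.map_cons, Multiset.sum_cons] at this ⊢
  omega

theorem lenSqSum_le_Lmax_mul_lenSum {s : Multisegment} (hs : IsMultisegment s) :
    lenSqSum s ≤ Lmax s * lenSum s := by
  rw [lenSqSum, lenSum, ← Multiset.sum_map_mul_left]
  refine Multiset.sum_map_le_sum_map _ _ fun Δ hΔ => ?_
  have hlen : 0 ≤ Δ.len := by have := hs Δ hΔ; simp only [Segment.len]; omega
  rw [sq]
  exact mul_le_mul_of_nonneg_right (len_le_Lmax hΔ) hlen

theorem removeEnd_of_lt {Δ : Segment} (h : Δ.1 < Δ.2) : removeEnd Δ = some (Δ.1, Δ.2 - 1) :=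
  if_pos (by omega)

theorem removeEnd_of_le {Δ : Segment} (h : Δ.2 ≤ Δ.1) : removeEnd Δ = none :=
  if_neg (by omega)

theorem mem_filterMap_removeEnd {s : Multisegment} {Δ : Segment} :
    Δ ∈ s.filterMap removeEnd ↔ Δ.1 ≤ Δ.2 ∧ (Δ.1, Δ.2 + 1) ∈ s := by
  simp only [Multiset.mem_filterMap, removeEnd]
  constructor
  · rintro ⟨Δ', hΔ', hre⟩
    split_ifs at hre with h
    cases hre
    exact ⟨h, by simpa using hΔ'⟩
  · rintro ⟨h, hmem⟩
    exact ⟨_, hmem, by simp [h]⟩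

theorem IsMultisegment.add_filterMap_removeEnd {r c : Multisegment} (hr : IsMultisegment r) :
    IsMultisegment (r + c.filterMap removeEnd) := by
  intro Δ hΔ
  rcases Multiset.mem_add.1 hΔ with hΔ | hΔ
  exacts [hr Δ hΔ, (mem_filterMap_removeEnd.1 hΔ).1]

theorem lenSum_filterMap_removeEnd {c : Multisegment} (hc : IsMultisegment c) :
    lenSum (c.filterMap removeEnd) = lenSum c - Multiset.card c := by
  induction c using Multiset.induction with
  | empty => simp [lenSum]
  | cons Δ c ih =>
    have hΔ := hc Δ (Multiset.mem_cons_self _ _)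
    have ih := ih fun Δ' h' => hc Δ' (Multiset.mem_cons_of_mem h')
    rcases hΔ.lt_or_eq with hlt | heq
    · rw [Multiset.filterMap_cons_some _ _ _ (removeEnd_of_lt hlt)]
      simp only [lenSum, Multiset.map_cons, Multiset.sum_cons, Multiset.card_cons,
        Segment.len] at ih ⊢
      push_cast; omega
    · rw [Multiset.filterMap_cons_none _ _ (removeEnd_of_le heq.ge)]
      simp only [lenSum, Multiset.map_cons, Multiset.sum_cons, Multiset.card_cons,
        Segment.len] at ih ⊢
      push_cast; omega

theorem Lmax_add_le_Lmax_add_filterMap_removeEnd (r c : Multisegment) :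
    Lmax (r + c) ≤ Lmax (r + c.filterMap removeEnd) + 1 := by
  refine Lmax_le_iff.2 ⟨by linarith [Lmax_nonneg (r + c.filterMap removeEnd)], fun Δ hΔ => ?_⟩
  rcases Multiset.mem_add.1 hΔ with hΔ | hΔ
  · linarith [len_le_Lmax (Multiset.mem_add.2 (Or.inl hΔ) : Δ ∈ r + c.filterMap removeEnd)]
  by_cases hlen : Δ.1 < Δ.2
  · have hmem : (Δ.1, Δ.2 - 1) ∈ r + c.filterMap removeEnd :=
      Multiset.mem_add.2 (Or.inr (mem_filterMap_removeEnd.2 ⟨by dsimp only; omega, by simpa⟩))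
    have := len_le_Lmax hmem
    simp only [Segment.len] at this ⊢
    omega
  · have : Δ.len ≤ 1 := by simp only [Segment.len]; omega
    linarith [Lmax_nonneg (r + c.filterMap removeEnd)]

def shortestStep (acc : Option Segment) (Δ : Segment) : Option Segment :=
  match acc with
  | none => some Δ
  | some Δ' => if Δ'.1 < Δ.1 then some Δ else some Δ'

theorem pickShortest_eq_foldl (m : ℤ) (l : List Segment) :
    pickShortest m l = (l.filter fun Δ => Δ.2 == m).foldl shortestStep none := rfl

theorem foldl_shortestStep_mem {t : List Segment} {acc : Option Segment} {Δ : Segment}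
    (h : t.foldl shortestStep acc = some Δ) : Δ ∈ t ∨ acc = some Δ := by
  induction t generalizing acc with
  | nil => exact Or.inr h
  | cons a t ih =>
    rcases ih h with hΔ | hacc
    · exact Or.inl (List.mem_cons_of_mem a hΔ)
    · cases acc with
      | none => cases hacc; exact Or.inl List.mem_cons_self
      | some Δ' =>
        simp only [shortestStep] at hacc
        split_ifs at hacc <;> cases hacc
        exacts [Or.inl List.mem_cons_self, Or.inr rfl]

theorem shortestStep_ne_none (acc : Option Segment) (Δ : Segment) : shortestStep acc Δ ≠ none := by
  unfold shortestStep
  split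
  · simp
  · split_ifs <;> simp

theorem foldl_shortestStep_ne_none (t : List Segment) {acc : Option Segment} (h : acc ≠ none) :
    t.foldl shortestStep acc ≠ none := by
  induction t generalizing acc with
  | nil => exact h
  | cons a t ih => exact ih (shortestStep_ne_none acc a)

theorem pickShortest_mem {m : ℤ} {l : List Segment} {Δ : Segment}
    (h : pickShortest m l = some Δ) : Δ ∈ l ∧ Δ.2 = m := by
  rw [pickShortest_eq_foldl] at h
  simpa using foldl_shortestStep_mem h

theorem pickShortest_ne_none {m : ℤ} {l : List Segment} {Δ : Segment} (hΔ : Δ ∈ l)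
    (hm : Δ.2 = m) : pickShortest m l ≠ none := by
  rw [pickShortest_eq_foldl]
  obtain ⟨s, t, hst⟩ := List.append_of_mem
    (List.mem_filter.2 ⟨hΔ, by simpa using hm⟩ : Δ ∈ l.filter fun Δ => Δ.2 == m)
  rw [hst, List.foldl_append, List.foldl_cons]
  exact foldl_shortestStep_ne_none t (shortestStep_ne_none _ Δ)

theorem pickShortest_of_filter_eq_singleton {m : ℤ} {l : List Segment} {Δ : Segment}
    (h : (l.filter fun Δ => Δ.2 == m) = [Δ]) : pickShortest m l = some Δ := by
  rw [pickShortest_eq_foldl, h]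
  rfl

theorem Multiset.cons_coe_erase {α : Type*} [BEq α] [LawfulBEq α] {l : List α} {a : α}
    (h : a ∈ l) : a ::ₘ ↑(l.erase a) = (↑l : Multiset α) :=
  Multiset.coe_eq_coe.2 (List.perm_cons_erase h).symm

theorem pickChain_spec (fuel : ℕ) (Δ : Segment) (rest : List Segment) :
    ((pickChain fuel Δ rest).1 + (pickChain fuel Δ rest).2 : Multisegment) = Δ ::ₘ ↑rest ∧
      (pickChain fuel Δ rest).1 ≠ [] := by
  induction fuel generalizing Δ rest with
  | zero => simp [pickChain]
  | succ n ih =>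
    rw [pickChain]
    split
    · simp
    · next Δ' hΔ' =>
      have hmem : Δ' ∈ rest := (List.mem_filter.1 (pickShortest_mem hΔ').1).1
      refine ⟨?_, List.cons_ne_nil _ _⟩
      rw [← Multiset.cons_coe, Multiset.cons_add, (ih Δ' (rest.erase Δ')).1,
        Multiset.cons_coe_erase hmem]

theorem mwIter_eq_some {l : List Segment} (hl : l ≠ []) :
    ∃ (seg : Segment) (c r : List Segment), mwIter l = some (seg, r ++ c.filterMap removeEnd) ∧
      (↑c + ↑r : Multisegment) = ↑l ∧ c ≠ [] := by
  obtain ⟨e, he⟩ := Option.ne_none_iff_exists'.1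
    (mt List.max?_eq_none_iff.1 (by simpa using hl) : (l.map fun Δ => Δ.2).max? ≠ none)
  obtain ⟨Δ₀, hΔ₀, hΔ₀e⟩ := List.mem_map.1 (List.max?_mem he)
  obtain ⟨Δe, hΔe⟩ := Option.ne_none_iff_exists'.1 (pickShortest_ne_none hΔ₀ hΔ₀e)
  obtain ⟨hchain, hne⟩ := pickChain_spec l.length Δe (l.erase Δe)
  simp only [mwIter, he, hΔe]
  refine ⟨_, _, _, rfl, ?_, hne⟩
  rw [hchain, Multiset.cons_coe_erase (pickShortest_mem hΔe).1]

theorem mwIter_step {l : List Segment} (hv : IsMultisegment ↑l) (hl : l ≠ []) :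
    ∃ seg l', mwIter l = some (seg, l') ∧ IsMultisegment ↑l' ∧
      lenSum ↑l' < lenSum ↑l ∧ Lmax ↑l ≤ Lmax ↑l' + 1 := by
  obtain ⟨seg, c, r, hiter, hcr, hc⟩ := mwIter_eq_some hl
  have hl' : (↑(r ++ c.filterMap removeEnd) : Multisegment) =
      ↑r + (↑c : Multisegment).filterMap removeEnd := by
    rw [← Multiset.coe_add, Multiset.filterMap_coe]
  rw [← hcr] at hv ⊢
  have hvc : IsMultisegment ↑c := fun Δ hΔ => hv Δ (Multiset.mem_add.2 (Or.inl hΔ))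
  have hvr : IsMultisegment ↑r := fun Δ hΔ => hv Δ (Multiset.mem_add.2 (Or.inr hΔ))
  have hcard : 0 < Multiset.card (c : Multisegment) := by simpa [List.length_pos_iff] using hc
  refine ⟨seg, _, hiter, ?_, ?_, ?_⟩ <;> rw [hl']
  · exact hvr.add_filterMap_removeEnd
  · rw [lenSum_add, lenSum_filterMap_removeEnd hvc, lenSum_add]
    omega
  · rw [add_comm]
    exact Lmax_add_le_Lmax_add_filterMap_removeEnd _ _

theorem Lmax_le_length_mwAux (fuel : ℕ) {l : List Segment} (hv : IsMultisegment ↑l)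
    (hfuel : lenSum ↑l ≤ fuel) : Lmax ↑l ≤ (mwAux fuel l).length := by
  induction fuel generalizing l with
  | zero => exact (Lmax_le_lenSum hv).trans (by simpa [mwAux] using hfuel)
  | succ n ih =>
    rcases eq_or_ne l [] with rfl | hl
    · simp [Lmax]
    obtain ⟨seg, l', hiter, hv', hlt, hLmax⟩ := mwIter_step hv hl
    have := ih hv' (by push_cast at hfuel; omega)
    simp only [mwAux, hiter, List.length_cons]
    push_cast
    omega

theorem totalSize_eq_lenSum {l : List Segment} (hv : IsMultisegment ↑l) :
    (totalSize l : ℤ) = lenSum ↑l := by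
  induction l with
  | nil => rfl
  | cons Δ l ih =>
    have hΔ := hv Δ (by simp)
    have := ih fun Δ' h' => hv Δ' (by simp [Multiset.mem_coe.1 h'])
    simp only [totalSize, lenSum, List.map_cons, List.sum_cons, ← Multiset.cons_coe,
      Multiset.map_cons, Multiset.sum_cons, Segment.len] at this ⊢
    rw [Nat.cast_add, Int.toNat_of_nonneg (by omega), this]

theorem Lmax_le_card_dual {γ : Multisegment} (hγ : IsMultisegment γ) :
    Lmax γ ≤ Multiset.card (dual γ) := by
  have hv : IsMultisegment ↑γ.toList := by rwa [Multiset.coe_toList]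
  have := Lmax_le_length_mwAux _ hv (totalSize_eq_lenSum hv).ge
  rwa [Multiset.coe_toList] at this

section SimpleMultisegment

variable {b e : ℤ}

theorem simpleMS_eq_map (b e : ℤ) (n : ℕ) :
    simpleMS b e n = (Multiset.range n).map fun i : ℕ => (b + i, e + i) := by
  simp [simpleMS, Multiset.map_map]

theorem simpleMS_succ (b e : ℤ) (n : ℕ) :
    simpleMS b e (n + 1) = (b + n, e + n) ::ₘ simpleMS b e n := by
  rw [simpleMS_eq_map, simpleMS_eq_map, Multiset.range_succ, Multiset.map_cons]

theorem mem_simpleMS {n i : ℕ} (hi : i < n) : ((b + i, e + i) : Segment) ∈ simpleMS b e n := by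
  rw [simpleMS_eq_map]
  exact Multiset.mem_map.2 ⟨i, Multiset.mem_range.2 hi, rfl⟩

theorem isMultisegment_simpleMS (hbe : b ≤ e) (n : ℕ) : IsMultisegment (simpleMS b e n) := by
  intro Δ hΔ
  rw [simpleMS_eq_map] at hΔ
  obtain ⟨i, -, rfl⟩ := Multiset.mem_map.1 hΔ
  dsimp only
  omega

theorem lenSum_simpleMS (b e : ℤ) (n : ℕ) : lenSum (simpleMS b e n) = n * (e - b + 1) := by
  induction n with
  | zero => simp [lenSum, simpleMS]
  | succ n ih =>
    rw [simpleMS_succ, ← Multiset.singleton_add, lenSum_add, ih]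
    simp only [lenSum, Multiset.map_singleton, Multiset.sum_singleton, Segment.len]
    push_cast; ring

theorem lenSqSum_simpleMS (b e : ℤ) (n : ℕ) :
    lenSqSum (simpleMS b e n) = n * (e - b + 1) ^ 2 := by
  induction n with
  | zero => simp [lenSqSum, simpleMS]
  | succ n ih =>
    rw [lenSqSum] at ih ⊢
    rw [simpleMS_succ, Multiset.map_cons, Multiset.sum_cons, ih, Segment.len]
    push_cast; ring

theorem filter_eq_singleton_of_coe_eq_simpleMS {l : List Segment} {n j : ℕ} {p : Segment → Bool}
    (hl : (↑l : Multisegment) = simpleMS b e n) (hj : j < n)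
    (hp : ∀ i < n, p (b + i, e + i) = true ↔ i = j) : l.filter p = [(b + j, e + j)] := by
  refine Multiset.coe_eq_singleton.1 ?_
  rw [show (↑(l.filter p) : Multisegment) = (↑l : Multisegment).filter (p · = true) by
      simp [Multiset.filter_coe], hl, simpleMS_eq_map, Multiset.filter_map,
    Multiset.filter_congr (q := (· = j)) fun i hi => by simpa using hp i (Multiset.mem_range.1 hi),
    Multiset.filter_eq', Multiset.count_eq_one_of_mem (Multiset.nodup_range n)
      (Multiset.mem_range.2 hj), Multiset.replicate_one, Multiset.map_singleton]

/-- `(b + i, e + i)` is the only segment of the rest that precedes `(b + i + 1, e + i + 1)` and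
ends one step lower, so the chain started at the top segment exhausts the simple multisegment. -/
theorem pickChain_simpleMS (hbe : b ≤ e) {k fuel : ℕ} (hk : k ≤ fuel) {rest : List Segment}
    (hrest : (↑rest : Multisegment) = simpleMS b e k) :
    (↑(pickChain fuel (b + k, e + k) rest).1 : Multisegment) = simpleMS b e (k + 1) ∧
      (pickChain fuel (b + k, e + k) rest).2 = [] := by
  induction k generalizing fuel rest with
  | zero =>
    obtain rfl : rest = [] := by simpa [simpleMS] using hrest
    cases fuel <;> simp [pickChain, pickShortest, simpleMS]
  | succ k ih =>
    obtain ⟨m, rfl⟩ : ∃ m, fuel = m + 1 := ⟨fuel - 1, by omega⟩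
    have hfilter : ((rest.filter fun Δ' => decide (Precedes Δ' (b + ↑(k + 1), e + ↑(k + 1)))).filter
        fun Δ => Δ.2 == e + ↑(k + 1) - 1) = [(b + k, e + k)] := by
      rw [List.filter_filter]
      refine filter_eq_singleton_of_coe_eq_simpleMS hrest (Nat.lt_succ_self k) fun i hi => ?_
      simp only [Bool.and_eq_true, beq_iff_eq, decide_eq_true_iff]
      unfold Precedes
      push_cast
      omega
    have hmem : ((b + k, e + k) : Segment) ∈ rest :=
      Multiset.mem_coe.1 (hrest ▸ mem_simpleMS (Nat.lt_succ_self k))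
    have herase : (↑(rest.erase (b + k, e + k)) : Multisegment) = simpleMS b e k := by
      rw [← Multiset.cons_inj_right (b + k, e + k), Multiset.cons_coe_erase hmem, hrest,
        simpleMS_succ]
    obtain ⟨hchain, hleft⟩ := ih (fuel := m) (by omega) herase
    rw [pickChain, pickShortest_of_filter_eq_singleton hfilter]
    refine ⟨?_, hleft⟩
    rw [← Multiset.cons_coe, hchain, simpleMS_succ _ _ (k + 1)]

theorem mwIter_simpleMS (hbe : b ≤ e) {k : ℕ} {l : List Segment}
    (hl : (↑l : Multisegment) = simpleMS b e (k + 1)) :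
    ∃ seg l', mwIter l = some (seg, l') ∧
      (↑l' : Multisegment) = (simpleMS b e (k + 1)).filterMap removeEnd := by
  have hlen : l.length = k + 1 := by
    simpa [simpleMS_eq_map] using congrArg Multiset.card hl
  have hmax : (l.map fun Δ => Δ.2).max? = some (e + k) := by
    refine List.max?_eq_some_iff.2 ⟨List.mem_map.2 ⟨(b + k, e + k), ?_, rfl⟩, fun x hx => ?_⟩
    · exact Multiset.mem_coe.1 (hl ▸ mem_simpleMS (Nat.lt_succ_self k))
    · obtain ⟨Δ, hΔ, rfl⟩ := List.mem_map.1 hx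
      rw [← Multiset.mem_coe, hl, simpleMS_eq_map] at hΔ
      obtain ⟨i, hi, rfl⟩ := Multiset.mem_map.1 hΔ
      have := Multiset.mem_range.1 hi
      dsimp only
      omega
  have htop : pickShortest (e + k) l = some (b + k, e + k) := by
    refine pickShortest_of_filter_eq_singleton
      (filter_eq_singleton_of_coe_eq_simpleMS hl (Nat.lt_succ_self k) fun i hi => ?_)
    simp only [beq_iff_eq]
    omega
  have herase : (↑(l.erase (b + k, e + k)) : Multisegment) = simpleMS b e k := by
    rw [← Multiset.cons_inj_right (b + k, e + k), Multiset.cons_coe_erase, hl, simpleMS_succ]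
    exact Multiset.mem_coe.1 (hl ▸ mem_simpleMS (Nat.lt_succ_self k))
  obtain ⟨hchain, hleft⟩ := pickChain_simpleMS hbe (by omega : k ≤ l.length) herase
  simp only [mwIter, hmax, htop]
  refine ⟨_, _, rfl, ?_⟩
  rw [hleft, List.nil_append, ← Multiset.filterMap_coe, hchain]

theorem filterMap_removeEnd_simpleMS_of_lt (h : b < e) (n : ℕ) :
    (simpleMS b e n).filterMap removeEnd = simpleMS b (e - 1) n := by
  induction n with
  | zero => simp [simpleMS]
  | succ n ih =>
    rw [simpleMS_succ, simpleMS_succ, Multiset.filterMap_cons_some _ _ _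
      (removeEnd_of_lt (by dsimp only; omega)), ih]
    congr 2
    ring

theorem filterMap_removeEnd_simpleMS_self (b : ℤ) (n : ℕ) :
    (simpleMS b b n).filterMap removeEnd = 0 := by
  induction n with
  | zero => simp [simpleMS]
  | succ n ih => rwa [simpleMS_succ, Multiset.filterMap_cons_none _ _ (removeEnd_of_le le_rfl)]

theorem length_mwAux_simpleMS {k : ℕ} (fuel : ℕ) {l : List Segment} (hbe : b ≤ e)
    (hfuel : e - b + 1 ≤ fuel) (hl : (↑l : Multisegment) = simpleMS b e (k + 1)) :
    ((mwAux fuel l).length : ℤ) = e - b + 1 := by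
  induction fuel generalizing e l with
  | zero => omega
  | succ n ih =>
    obtain ⟨seg, l', hiter, hl'⟩ := mwIter_simpleMS hbe hl
    simp only [mwAux, hiter, List.length_cons]
    rcases hbe.lt_or_eq with hlt | rfl
    · have := ih (by omega) (by push_cast at hfuel; omega)
        (hl'.trans (filterMap_removeEnd_simpleMS_of_lt hlt _))
      push_cast
      omega
    · obtain rfl : l' = [] := by simpa [filterMap_removeEnd_simpleMS_self] using hl'
      cases n <;> simp [mwAux, mwIter]

theorem card_dual_simpleMS_le (hbe : b ≤ e) (n : ℕ) :
    (Multiset.card (dual (simpleMS b e n)) : ℤ) ≤ e - b + 1 := by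
  cases n with
  | zero => simp [dual, simpleMS, totalSize, mwAux]; omega
  | succ k =>
    have hv : IsMultisegment ↑(simpleMS b e (k + 1)).toList := by
      rw [Multiset.coe_toList]; exact isMultisegment_simpleMS hbe _
    have hfuel : e - b + 1 ≤ totalSize (simpleMS b e (k + 1)).toList := by
      rw [totalSize_eq_lenSum hv, Multiset.coe_toList, lenSum_simpleMS]
      exact le_mul_of_one_le_left (by omega) (by push_cast; omega)
    rw [dual, Multiset.coe_card, length_mwAux_simpleMS _ hbe hfuel (Multiset.coe_toList _)]

end SimpleMultisegment

theorem stmt10_general (b e : ℤ) (n : ℕ) (hbe : b ≤ e) (β : Multisegment)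
    (h1 : mle (simpleMS b e n) β) (h2 : mle (dual (simpleMS b e n)) (dual β)) :
    simpleMS b e n = β := by
  have hα := isMultisegment_simpleMS hbe n
  have hβ := h1.isMultisegment_s10 hα
  have hLmax : Lmax β ≤ e - b + 1 := calc
    Lmax β ≤ Multiset.card (dual β) := Lmax_le_card_dual hβ
    _ ≤ Multiset.card (dual (simpleMS b e n)) := by exact_mod_cast h2.card_le
    _ ≤ e - b + 1 := card_dual_simpleMS_le hbe n
  refine h1.eq_of_lenSqSum_le hα ?_
  calc lenSqSum β ≤ Lmax β * lenSum β := lenSqSum_le_Lmax_mul_lenSum hβ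
    _ ≤ (e - b + 1) * lenSum β := mul_le_mul_of_nonneg_right hLmax (lenSum_nonneg hβ)
    _ = lenSqSum (simpleMS b e n) := by
      rw [h1.lenSum_eq, lenSum_simpleMS, lenSqSum_simpleMS]; ring

/-- if `α` is simple, `α ≤ β` and `α̃ ≤ β̃`, then `α = β`. -/
theorem stmt10 (b e : ℤ) (n : ℕ) (hbe : b ≤ e) (hn : 1 ≤ n) (β : Multisegment)
    (h1 : mle (simpleMS b e n) β) (h2 : mle (dual (simpleMS b e n)) (dual β)) :
    simpleMS b e n = β :=
  stmt10_general b e n hbe β h1 h2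
end

section
/- If α is an irreducible ladder multisegment, then n_{α̃} + n_α = S_α + c_α, where c_α = 1 and S_α is the cardinality of the union of all segments of α. -/
/-!
On a ladder the Mœglin–Waldspurger algorithm is explicit. If `e` is the largest end and
`e, e - 1, …, e - t + 1` is the maximal run of ends below it, the segments with these ends form
the chain: the step outputs `[e - t + 1, e]` and removes the end of each of these `t` segments.
Lengths cannot increase along the run, so its segments of length one are its top `v` ones, and
the step deletes exactly `v` segments. It also deletes exactly `e - v, …, e` from the set of
integers `x` with `x` or `x + 1` in `∪ α`, whose cardinality is `S_α + c_α`. Hence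
`n_α̃ + n_α - (S_α + c_α)` is unchanged by each step, and it vanishes for the empty multisegment.

If `c_α ≥ 2`, cutting `α` at a gap of `∪ α` gives two ladders on which the algorithm runs
independently, so that `C_α ≥ 2`.
-/

section Run

variable {s s' : Finset ℤ} {x y : ℤ} {t : ℕ}

lemma exists_sub_notMem (s : Finset ℤ) (x : ℤ) : ∃ j : ℕ, x - j ∉ s := by
  obtain ⟨_, ⟨j, rfl⟩, hj⟩ := (Set.infinite_range_of_injective (f := fun j : ℕ => x - j)
    (fun i j h => by simpa using h)).exists_notMem_finset s
  exact ⟨j, hj⟩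

/-- The number of consecutive integers `x, x - 1, x - 2, …` that lie in `s`. -/
def runLen (s : Finset ℤ) (x : ℤ) : ℕ := Nat.find (exists_sub_notMem s x)

lemma sub_runLen_notMem : x - runLen s x ∉ s := Nat.find_spec (exists_sub_notMem s x)

lemma mem_of_sub_runLen_lt (h₁ : x - runLen s x < y) (h₂ : y ≤ x) : y ∈ s := by
  have := Nat.find_min (exists_sub_notMem s x) (m := (x - y).toNat)
    (by change _ < runLen s x; omega)
  rwa [not_not, Int.toNat_of_nonneg (by omega), sub_sub_cancel] at this

lemma runLen_eq_of (h : ∀ y, x - t < y → y ≤ x → y ∈ s) (ht : x - t ∉ s) :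
    runLen s x = t :=
  (Nat.find_eq_iff _).2 ⟨ht, fun j hj hmem => hmem (h _ (by omega) (by omega))⟩

lemma lt_runLen_of_Icc_subset (h : Finset.Icc y x ⊆ s) : x - y < runLen s x := by
  by_contra! hle
  exact sub_runLen_notMem (s := s) (x := x) (h (Finset.mem_Icc.2 ⟨by omega, by omega⟩))

lemma runLen_mono (h : s ⊆ s') : runLen s x ≤ runLen s' x :=
  Nat.find_mono fun _ hj hmem => hj (h hmem)

lemma runLen_pos (h : x ∈ s) : 0 < runLen s x :=
  (Nat.find_pos _).2 (by simpa using h)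

lemma runLen_eq_zero (h : x ∉ s) : runLen s x = 0 :=
  (Nat.find_eq_zero _).2 (by simpa using h)

lemma runLen_insert_self : runLen (insert x s) x = runLen s (x - 1) + 1 := by
  refine runLen_eq_of (fun y h₁ h₂ => ?_) ?_
  · rcases eq_or_lt_of_le h₂ with rfl | hlt
    · exact Finset.mem_insert_self _ _
    · exact Finset.mem_insert_of_mem
        (mem_of_sub_runLen_lt (s := s) (x := x - 1) (by push_cast at h₁; omega) (by omega))
  · have := sub_runLen_notMem (s := s) (x := x - 1)
    rw [Finset.mem_insert, not_or]
    push_cast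
    exact ⟨by omega, by rwa [sub_add_eq_sub_sub, sub_right_comm]⟩

lemma runLen_union_of_lt (h : ∀ y ∈ s, y < x - runLen s' x) :
    runLen (s ∪ s') x = runLen s' x :=
  runLen_eq_of (fun _ h₁ h₂ => Finset.mem_union_right _ (mem_of_sub_runLen_lt h₁ h₂))
    (Finset.notMem_union.2 ⟨fun hs => (h _ hs).false, sub_runLen_notMem⟩)

lemma runLen_le_card : runLen s x ≤ s.card := by
  have hsub : (Finset.range (runLen s x)).image (fun j : ℕ => x - j) ⊆ s := by
    intro y hy
    obtain ⟨j, hj, rfl⟩ := Finset.mem_image.1 hy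
    exact mem_of_sub_runLen_lt (s := s) (x := x) (by simp at hj; omega) (by omega)
  have := Finset.card_le_card hsub
  rwa [Finset.card_image_of_injective _ (fun i j h => by simpa using h),
    Finset.card_range] at this

end Run

def ends (α : Multisegment) : Finset ℤ := (α.map Prod.snd).toFinset

@[simp] lemma mem_ends {α : Multisegment} {y : ℤ} : y ∈ ends α ↔ ∃ Δ ∈ α, Δ.2 = y := by
  simp [ends]

lemma ends_mono {α β : Multisegment} (h : α ≤ β) : ends α ⊆ ends β :=
  Multiset.toFinset_subset.2 (Multiset.subset_of_le (Multiset.map_le_map h))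

lemma ends_cons (Δ : Segment) (α : Multisegment) : ends (Δ ::ₘ α) = insert Δ.2 (ends α) := by
  simp [ends]

lemma runLen_ends_cons (Δ : Segment) (α : Multisegment) :
    runLen (ends (Δ ::ₘ α)) Δ.2 = runLen (ends α) (Δ.2 - 1) + 1 := by
  rw [ends_cons, runLen_insert_self]

lemma runLen_ends_le_card (α : Multisegment) (x : ℤ) : runLen (ends α) x ≤ Multiset.card α :=
  runLen_le_card.trans <| (Multiset.toFinset_card_le _).trans (Multiset.card_map _ _).le

lemma ends_add (α β : Multisegment) : ends (α + β) = ends α ∪ ends β := by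
  simp [ends]

lemma card_filter_eq_card_filter_ends {α : Multisegment} (h : (α.map Prod.snd).Nodup)
    (p : ℤ → Prop) [DecidablePred p] :
    Multiset.card (α.filter fun Δ => p Δ.2) = ((ends α).filter p).card := by
  rw [ends, ← Multiset.toFinset_filter, Multiset.toFinset_card_of_nodup (h.filter p),
    Multiset.filter_map, Multiset.card_map]
  rfl

/-- A ladder of nonempty segments, in a form that the algorithm visibly preserves. -/
structure Ladder (α : Multisegment) : Prop where
  nodup_ends : (α.map Prod.snd).Nodup
  base_le_end : ∀ Δ ∈ α, Δ.1 ≤ Δ.2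
  base_lt_base : ∀ Δ₁ ∈ α, ∀ Δ₂ ∈ α, Δ₁.2 < Δ₂.2 → Δ₁.1 < Δ₂.1

namespace Ladder

variable {α β : Multisegment}

lemma mono (hα : Ladder α) (h : β ≤ α) : Ladder β where
  nodup_ends := Multiset.nodup_of_le (Multiset.map_le_map h) hα.nodup_ends
  base_le_end Δ hΔ := hα.base_le_end Δ (Multiset.mem_of_le h hΔ)
  base_lt_base Δ₁ h₁ Δ₂ h₂ :=
    hα.base_lt_base Δ₁ (Multiset.mem_of_le h h₁) Δ₂ (Multiset.mem_of_le h h₂)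

lemma nodup (hα : Ladder α) : α.Nodup := hα.nodup_ends.of_map _

lemma eq_of_end_eq (hα : Ladder α) {Δ₁ Δ₂ : Segment} (h₁ : Δ₁ ∈ α) (h₂ : Δ₂ ∈ α)
    (h : Δ₁.2 = Δ₂.2) : Δ₁ = Δ₂ :=
  Multiset.inj_on_of_nodup_map hα.nodup_ends Δ₁ h₁ Δ₂ h₂ h

lemma end_lt_of_mem_cons {Δ : Segment} (hL : Ladder (Δ ::ₘ α)) (hub : ∀ Δ' ∈ α, Δ'.2 ≤ Δ.2) :
    ∀ Δ' ∈ α, Δ'.2 < Δ.2 := by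
  have hnd := hL.nodup_ends
  rw [Multiset.map_cons, Multiset.nodup_cons, Multiset.mem_map] at hnd
  exact fun Δ' h => lt_of_le_of_ne (hub Δ' h) fun he => hnd.1 ⟨Δ', h, he⟩

lemma of_isLadder (hα : IsMultisegment α) (hlad : IsLadder α) : Ladder α := by
  obtain ⟨l, rfl, hchain⟩ := hlad
  have : IsTrans Segment fun Δ₁ Δ₂ => Δ₁.1 < Δ₂.1 ∧ Δ₁.2 < Δ₂.2 :=
    ⟨fun _ _ _ h₁ h₂ => ⟨h₁.1.trans h₂.1, h₁.2.trans h₂.2⟩⟩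
  have hl : l.Pairwise fun Δ₁ Δ₂ => Δ₁.1 < Δ₂.1 ∧ Δ₁.2 < Δ₂.2 :=
    List.isChain_iff_pairwise.1 hchain
  refine ⟨?_, hα, (hl.imp fun h _ => h.1).forall_of_forall_of_flip
    (fun _ _ h => absurd h (lt_irrefl _))
    (hl.imp fun h hlt => absurd (h.2.trans hlt) (lt_irrefl _))⟩
  rw [Multiset.map_coe, Multiset.coe_nodup]
  exact (List.pairwise_map.2 (hl.imp And.right)).nodup

end Ladder

lemma pickShortest_eq_none {m : ℤ} {l : List Segment} (h : ∀ Δ ∈ l, Δ.2 ≠ m) :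
    pickShortest m l = none := by
  rw [pickShortest, List.filter_eq_nil_iff.2 (by simpa using h)]
  rfl

lemma pickShortest_eq_some {m : ℤ} {l : List Segment} {Δ₀ : Segment} (h₀ : Δ₀ ∈ l)
    (he : Δ₀.2 = m) (huniq : ∀ Δ ∈ l, Δ.2 = m → Δ = Δ₀) : pickShortest m l = some Δ₀ := by
  obtain ⟨k, hk⟩ : ∃ k, l.filter (fun Δ => Δ.2 == m) = List.replicate (k + 1) Δ₀ := by
    refine ⟨(l.filter fun Δ => Δ.2 == m).length - 1, List.eq_replicate_iff.2 ⟨?_, ?_⟩⟩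
    · have : 0 < (l.filter fun Δ => Δ.2 == m).length :=
        List.length_pos_of_mem (List.mem_filter.2 ⟨h₀, by simpa using he⟩)
      omega
    · intro Δ hΔ
      obtain ⟨hΔl, hΔm⟩ := List.mem_filter.1 hΔ
      exact huniq Δ hΔl (by simpa using hΔm)
  rw [pickShortest, hk]
  clear hk
  induction k with
  | zero => rfl
  | succ k ih => simpa [List.replicate_succ] using ih

lemma coe_list_erase (l : List Segment) (a : Segment) :
    ((l.erase a : List Segment) : Multisegment) = (l : Multisegment).erase a := by
  rw [Multiset.coe_erase]
  congr
  exact lawful_beq_subsingleton _ _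

lemma pickChain_spec_of_runLen_eq_zero {Δ : Segment} {rest : List Segment}
    (hlt : ∀ Δ' ∈ rest, Δ'.2 < Δ.2) :
    (([Δ] : List Segment) : Multisegment)
        = Δ ::ₘ (rest : Multisegment).filter (fun Δ' => Δ.2 - 1 - (0 : ℕ) < Δ'.2) ∧
      (rest : Multisegment)
        = (rest : Multisegment).filter (fun Δ' => Δ'.2 ≤ Δ.2 - 1 - (0 : ℕ)) ∧
      [Δ].length = 0 + 1 := by
  refine ⟨?_, ?_, rfl⟩
  · rw [Multiset.filter_eq_nil.2 fun Δ' h => by have := hlt Δ' h; omega]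
    rfl
  · exact (Multiset.filter_eq_self.2 fun Δ' h => by have := hlt Δ' h; omega).symm

/-- In a ladder the segment ending just below `Δ` precedes `Δ`, so it is the one chosen. -/
lemma Ladder.pickShortest_eq_some_of_end_eq {Δ Δ' : Segment} {rest : List Segment}
    (hL : Ladder (Δ ::ₘ rest)) (hΔ' : Δ' ∈ rest) (he : Δ'.2 = Δ.2 - 1) :
    pickShortest (Δ.2 - 1) (rest.filter fun Δ'' => decide (Precedes Δ'' Δ)) = some Δ' := by
  have hΔ'm : Δ' ∈ Δ ::ₘ (rest : Multisegment) := Multiset.mem_cons_of_mem hΔ'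
  refine pickShortest_eq_some (List.mem_filter.2 ⟨hΔ', ?_⟩) he fun Δ'' h he'' => ?_
  · have hbase := hL.base_lt_base Δ' hΔ'm Δ (Multiset.mem_cons_self _ _) (by omega)
    have := hL.base_le_end Δ (Multiset.mem_cons_self _ _)
    exact decide_eq_true ⟨hbase, by omega, by omega⟩
  · exact hL.eq_of_end_eq (Multiset.mem_cons_of_mem
      (Multiset.mem_coe.2 (List.mem_of_mem_filter h))) hΔ'm (by rw [he, he''])

lemma pickChain_spec_s12 (fuel : ℕ) (Δ : Segment) (rest : List Segment) (t : ℕ)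
    (hL : Ladder (Δ ::ₘ rest)) (hlt : ∀ Δ' ∈ rest, Δ'.2 < Δ.2)
    (ht : runLen (ends rest) (Δ.2 - 1) = t) (hfuel : t ≤ fuel) :
    ((pickChain fuel Δ rest).1 : Multisegment)
        = Δ ::ₘ (rest : Multisegment).filter (fun Δ' => Δ.2 - 1 - t < Δ'.2) ∧
      ((pickChain fuel Δ rest).2 : Multisegment)
        = (rest : Multisegment).filter (fun Δ' => Δ'.2 ≤ Δ.2 - 1 - t) ∧
      (pickChain fuel Δ rest).1.length = t + 1 := by
  induction fuel generalizing Δ rest t with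
  | zero =>
    obtain rfl : t = 0 := by omega
    exact pickChain_spec_of_runLen_eq_zero hlt
  | succ n ih =>
    by_cases hnext : Δ.2 - 1 ∈ ends rest
    · obtain ⟨Δ', hΔ', hΔ'e⟩ := mem_ends.1 hnext
      have hΔ'l : Δ' ∈ rest := Multiset.mem_coe.1 hΔ'
      have hrest : Δ' ::ₘ ((rest.erase Δ' : List Segment) : Multisegment) = rest := by
        rw [coe_list_erase, Multiset.cons_erase hΔ']
      have hL' : Ladder (Δ' ::ₘ (rest.erase Δ' : List Segment)) := by
        rw [hrest]; exact hL.mono (Multiset.le_cons_self _ _)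
      have hps := hL.pickShortest_eq_some_of_end_eq hΔ'l hΔ'e
      have hlt' : ∀ Δ'' ∈ rest.erase Δ', Δ''.2 < Δ'.2 := fun Δ'' h =>
        hL'.end_lt_of_mem_cons (fun Δ'' h => by
          have := hlt Δ'' (List.mem_of_mem_erase (Multiset.mem_coe.1 h)); omega) Δ''
          (Multiset.mem_coe.2 h)
      have ht' : runLen (ends (rest.erase Δ' : List Segment)) (Δ'.2 - 1) = t - 1 := by
        have := runLen_ends_cons Δ' (rest.erase Δ' : List Segment)
        rw [hrest] at this
        rw [← hΔ'e] at ht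
        omega
      obtain ⟨ih₁, ih₂, ih₃⟩ := ih Δ' (rest.erase Δ') (t - 1) hL' hlt' ht' (by omega)
      have ht0 : 0 < t := ht ▸ runLen_pos hnext
      have hthr : Δ'.2 - 1 - ((t - 1 : ℕ) : ℤ) = Δ.2 - 1 - t := by push_cast [ht0]; omega
      simp only [pickChain, hps]
      refine ⟨?_, ?_, by simp [ih₃]; omega⟩
      · rw [← Multiset.cons_coe, ih₁, hthr, ← hrest,
          Multiset.filter_cons_of_pos (p := fun Δ'' : Segment => Δ.2 - 1 - (t : ℤ) < Δ''.2) _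
            (by omega)]
      · rw [ih₂, hthr, ← hrest,
          Multiset.filter_cons_of_neg (p := fun Δ'' : Segment => Δ''.2 ≤ Δ.2 - 1 - (t : ℤ)) _
            (by omega)]
    · have hps : pickShortest (Δ.2 - 1) (rest.filter fun Δ'' => decide (Precedes Δ'' Δ))
          = none :=
        pickShortest_eq_none fun Δ' h he =>
          hnext (mem_ends.2 ⟨Δ', Multiset.mem_coe.2 (List.mem_of_mem_filter h), he⟩)
      obtain rfl : t = 0 := ht ▸ runLen_eq_zero hnext
      simp only [pickChain, hps]
      exact pickChain_spec_of_runLen_eq_zero hlt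

def mwStep (α : Multisegment) (e : ℤ) (t : ℕ) : Multisegment :=
  α.filter (fun Δ => Δ.2 ≤ e - t) +
    ((α.filter fun Δ => e - t < Δ.2).filter fun Δ => Δ.1 < Δ.2).map fun Δ => (Δ.1, Δ.2 - 1)

lemma coe_filterMap_removeEnd (l : List Segment) :
    ((l.filterMap removeEnd : List Segment) : Multisegment)
      = ((l : Multisegment).filter fun Δ => Δ.1 < Δ.2).map fun Δ => (Δ.1, Δ.2 - 1) := by
  rw [Multiset.map_filter_eq_filterMap, ← Multiset.filterMap_coe]
  congr 1
  funext Δ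
  simp only [removeEnd, Int.le_sub_one_iff]

lemma mwIter_spec (l : List Segment) (hL : Ladder l) {e : ℤ} (he : e ∈ ends l)
    (hub : ∀ Δ ∈ l, Δ.2 ≤ e) :
    ∃ l' : List Segment, mwIter l = some ((e - runLen (ends l) e + 1, e), l') ∧
      (l' : Multisegment) = mwStep l e (runLen (ends l) e) := by
  obtain ⟨Δe, hΔe, rfl⟩ := mem_ends.1 he
  have hΔel : Δe ∈ l := Multiset.mem_coe.1 hΔe
  set t := runLen (ends l) Δe.2 with ht
  have hmax : (l.map fun Δ => Δ.2).max? = some Δe.2 :=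
    List.max?_eq_some_iff.2 ⟨List.mem_map_of_mem hΔel, fun b hb => by
      obtain ⟨Δ, hΔ, rfl⟩ := List.mem_map.1 hb
      exact hub Δ hΔ⟩
  have hps : pickShortest Δe.2 l = some Δe :=
    pickShortest_eq_some hΔel rfl fun Δ hΔ he => hL.eq_of_end_eq (Multiset.mem_coe.2 hΔ) hΔe he
  have hl : Δe ::ₘ ((l.erase Δe : List Segment) : Multisegment) = l := by
    rw [coe_list_erase, Multiset.cons_erase hΔe]
  have hL' : Ladder (Δe ::ₘ (l.erase Δe : List Segment)) := hl ▸ hL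
  have hlt : ∀ Δ ∈ l.erase Δe, Δ.2 < Δe.2 := fun Δ h =>
    hL'.end_lt_of_mem_cons (fun Δ h => hub Δ (List.mem_of_mem_erase (Multiset.mem_coe.1 h))) Δ
      (Multiset.mem_coe.2 h)
  have hrun : runLen (ends (l.erase Δe : List Segment)) (Δe.2 - 1) = t - 1 := by
    have := runLen_ends_cons Δe (l.erase Δe : List Segment)
    rw [hl] at this
    omega
  have hfuel : t - 1 ≤ l.length := by
    have := runLen_ends_le_card (l.erase Δe : List Segment) (Δe.2 - 1)
    have := List.length_erase_le (a := Δe) (l := l)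
    simp only [Multiset.coe_card] at *
    omega
  have ht0 : 0 < t := runLen_pos he
  obtain ⟨hchain, hleft, hlen⟩ :=
    pickChain_spec_s12 l.length Δe (l.erase Δe) (t - 1) hL' hlt hrun hfuel
  have hthr : Δe.2 - 1 - ((t - 1 : ℕ) : ℤ) = Δe.2 - t := by push_cast [ht0]; ring
  refine ⟨_, by simp only [mwIter, hmax, hps, hlen]; congr 3; omega, ?_⟩
  rw [← Multiset.coe_add, coe_filterMap_removeEnd, hchain, hleft, hthr, mwStep, ← hl,
    Multiset.filter_cons_of_neg (p := fun Δ : Segment => Δ.2 ≤ Δe.2 - t) _ (by omega),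
    Multiset.filter_cons_of_pos (p := fun Δ : Segment => Δe.2 - t < Δ.2) _ (by omega)]

section MwStep

variable {α : Multisegment} {e : ℤ} {t : ℕ}

lemma mem_mwStep_of_le {Δ : Segment} (hΔ : Δ ∈ α) (h : Δ.2 ≤ e - t) : Δ ∈ mwStep α e t :=
  Multiset.mem_add.2 (Or.inl (Multiset.mem_filter.2 ⟨hΔ, h⟩))

lemma mem_mwStep_of_lt {Δ : Segment} (hΔ : Δ ∈ α) (h : e - t < Δ.2) (hlt : Δ.1 < Δ.2) :
    (Δ.1, Δ.2 - 1) ∈ mwStep α e t :=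
  Multiset.mem_add.2 (Or.inr (Multiset.mem_map_of_mem _
    (Multiset.mem_filter.2 ⟨Multiset.mem_filter.2 ⟨hΔ, h⟩, hlt⟩)))

lemma exists_of_mem_mwStep {Δ : Segment} (h : Δ ∈ mwStep α e t) :
    ∃ Δ' ∈ α, Δ'.1 = Δ.1 ∧
      (Δ'.2 = Δ.2 ∧ Δ.2 ≤ e - t ∨ Δ'.2 = Δ.2 + 1 ∧ e - t ≤ Δ.2 ∧ Δ.1 ≤ Δ.2) := by
  rcases Multiset.mem_add.1 h with h | h
  · obtain ⟨hΔ, hle⟩ := Multiset.mem_filter.1 h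
    exact ⟨Δ, hΔ, rfl, Or.inl ⟨rfl, hle⟩⟩
  · obtain ⟨Δ', hΔ', rfl⟩ := Multiset.mem_map.1 h
    simp only [Multiset.mem_filter] at hΔ'
    exact ⟨Δ', hΔ'.1.1, rfl, Or.inr ⟨by ring, by omega, by omega⟩⟩

lemma ladder_mwStep (hL : Ladder α) (hrun : e - t ∉ ends α) : Ladder (mwStep α e t) where
  nodup_ends := by
    rw [mwStep, Multiset.map_add, Multiset.map_map, Multiset.nodup_add]
    refine ⟨Multiset.nodup_of_le (Multiset.map_le_map (Multiset.filter_le _ _)) hL.nodup_ends,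
      Multiset.Nodup.map_on (fun Δ₁ h₁ Δ₂ h₂ he => ?_) ((hL.nodup.filter _).filter _),
      Multiset.disjoint_left.2 fun ha hb => ?_⟩
    · simp only [Multiset.mem_filter] at h₁ h₂
      exact hL.eq_of_end_eq h₁.1.1 h₂.1.1 (by simpa using he)
    · obtain ⟨Δ₁, h₁, rfl⟩ := Multiset.mem_map.1 ha
      obtain ⟨Δ₂, h₂, he⟩ := Multiset.mem_map.1 hb
      simp only [Multiset.mem_filter, Function.comp] at h₁ h₂ he
      exact hrun (mem_ends.2 ⟨Δ₁, h₁.1, by omega⟩)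
  base_le_end Δ h := by
    obtain ⟨Δ', hΔ', hb, h | h⟩ := exists_of_mem_mwStep h
    · have := hL.base_le_end Δ' hΔ'; omega
    · omega
  base_lt_base Δ₁ h₁ Δ₂ h₂ hlt := by
    obtain ⟨Δ₁', h₁', hb₁, he₁⟩ := exists_of_mem_mwStep h₁
    obtain ⟨Δ₂', h₂', hb₂, he₂⟩ := exists_of_mem_mwStep h₂
    have := hL.base_lt_base Δ₁' h₁' Δ₂' h₂' (by omega)
    omega

end MwStep

def deg (α : Multisegment) : ℕ := (α.map fun Δ => (Δ.2 - Δ.1 + 1).toNat).sum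

lemma deg_add (α β : Multisegment) : deg (α + β) = deg α + deg β := by
  simp [deg]

lemma deg_pos {α : Multisegment} (hα : ∀ Δ ∈ α, Δ.1 ≤ Δ.2) (h : α ≠ 0) : 0 < deg α := by
  obtain ⟨Δ, hΔ⟩ := Multiset.exists_mem_of_ne_zero h
  have := hα Δ hΔ
  exact lt_of_lt_of_le (by omega)
    (Multiset.le_sum_of_mem
      (Multiset.mem_map_of_mem (fun Δ : Segment => (Δ.2 - Δ.1 + 1).toNat) hΔ))

lemma deg_map_removeEnd_add_card {s : Multisegment} (hs : ∀ Δ ∈ s, Δ.1 ≤ Δ.2) :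
    deg ((s.filter fun Δ => Δ.1 < Δ.2).map fun Δ => (Δ.1, Δ.2 - 1)) + Multiset.card s
      = deg s := by
  induction s using Multiset.induction_on with
  | empty => rfl
  | cons Δ s ih =>
    have := hs Δ (Multiset.mem_cons_self _ _)
    have ih := ih fun Δ' h => hs Δ' (Multiset.mem_cons_of_mem h)
    by_cases hlt : Δ.1 < Δ.2
    · simp only [Multiset.filter_cons_of_pos (p := fun Δ : Segment => Δ.1 < Δ.2) s hlt, deg,
        Multiset.map_cons, Multiset.sum_cons, Multiset.card_cons] at ih ⊢
      omega
    · simp only [Multiset.filter_cons_of_neg (p := fun Δ : Segment => Δ.1 < Δ.2) s hlt, deg,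
        Multiset.map_cons, Multiset.sum_cons, Multiset.card_cons] at ih ⊢
      omega

lemma deg_mwStep_add_card {α : Multisegment} (hα : ∀ Δ ∈ α, Δ.1 ≤ Δ.2) (e : ℤ) (t : ℕ) :
    deg (mwStep α e t) + Multiset.card (α.filter fun Δ => e - t < Δ.2) = deg α := by
  rw [mwStep, deg_add, add_assoc, deg_map_removeEnd_add_card fun Δ h =>
    hα Δ (Multiset.mem_of_mem_filter h), ← deg_add]
  congr 1
  conv_rhs => rw [← Multiset.filter_add_not (fun Δ : Segment => Δ.2 ≤ e - t) α]
  simp only [not_le]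

lemma deg_mwStep_lt {α : Multisegment} (hα : ∀ Δ ∈ α, Δ.1 ≤ Δ.2) {e : ℤ} (he : e ∈ ends α) :
    deg (mwStep α e (runLen (ends α) e)) < deg α := by
  obtain ⟨Δ, hΔ, rfl⟩ := mem_ends.1 he
  have hpos : 0 < runLen (ends α) Δ.2 := runLen_pos he
  have := deg_mwStep_add_card hα Δ.2 (runLen (ends α) Δ.2)
  have : 0 < Multiset.card (α.filter fun Δ' => Δ.2 - runLen (ends α) Δ.2 < Δ'.2) :=
    Multiset.card_pos_iff_exists_mem.2 ⟨Δ, Multiset.mem_filter.2 ⟨hΔ, by omega⟩⟩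
  omega

lemma exists_max_end {α : Multisegment} (h : α ≠ 0) : ∃ e ∈ ends α, ∀ Δ ∈ α, Δ.2 ≤ e := by
  have hne : (ends α).Nonempty := by
    obtain ⟨Δ, hΔ⟩ := Multiset.exists_mem_of_ne_zero h
    exact ⟨Δ.2, mem_ends.2 ⟨Δ, hΔ, rfl⟩⟩
  exact ⟨_, (ends α).max'_mem hne, fun Δ hΔ => (ends α).le_max' _ (mem_ends.2 ⟨Δ, hΔ, rfl⟩)⟩

lemma mwAux_nil (fuel : ℕ) : mwAux fuel [] = [] := by
  cases fuel <;> rfl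

lemma mwAux_congr {l₁ l₂ : List Segment} {f₁ f₂ : ℕ} (hL : Ladder l₁)
    (h : (l₁ : Multisegment) = l₂) (hf₁ : deg l₁ ≤ f₁) (hf₂ : deg l₁ ≤ f₂) :
    ((mwAux f₁ l₁ : List Segment) : Multisegment) = mwAux f₂ l₂ := by
  induction f₁ generalizing l₁ l₂ f₂ with
  | zero =>
    obtain rfl : l₁ = [] := (Multiset.coe_eq_zero _).1 (by
      by_contra h0; have := deg_pos hL.base_le_end h0; omega)
    obtain rfl : l₂ = [] := (Multiset.coe_eq_zero _).1 h.symm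
    rw [mwAux_nil, mwAux_nil]
  | succ n ih =>
    rcases eq_or_ne (l₁ : Multisegment) 0 with h0 | h0
    · obtain rfl : l₁ = [] := (Multiset.coe_eq_zero _).1 h0
      obtain rfl : l₂ = [] := (Multiset.coe_eq_zero _).1 (h.symm.trans h0)
      rw [mwAux_nil, mwAux_nil]
    obtain ⟨e, he, hub⟩ := exists_max_end h0
    have hlt := deg_mwStep_lt hL.base_le_end he
    obtain ⟨m, rfl⟩ : ∃ m, f₂ = m + 1 := ⟨f₂ - 1, by omega⟩
    obtain ⟨l₁', hiter₁, hstep₁⟩ := mwIter_spec l₁ hL he hub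
    obtain ⟨l₂', hiter₂, hstep₂⟩ := mwIter_spec l₂ (h ▸ hL) (h ▸ he) fun Δ hΔ =>
      hub Δ (h ▸ Multiset.mem_coe.2 hΔ)
    rw [← h] at hiter₂ hstep₂
    rw [mwAux, hiter₁, mwAux, hiter₂, ← Multiset.cons_coe, ← Multiset.cons_coe]
    congr 1
    exact ih (hstep₁ ▸ ladder_mwStep hL sub_runLen_notMem) (hstep₁.trans hstep₂.symm)
      (by rw [hstep₁]; omega) (by rw [hstep₁]; omega)

lemma dual_eq_mwAux (α : Multisegment) : dual α = mwAux (deg α) α.toList := by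
  rw [dual]
  congr 2
  conv_rhs => rw [← Multiset.coe_toList α]
  rfl

@[simp] lemma dual_zero : dual 0 = 0 := by
  rw [dual_eq_mwAux, Multiset.toList_zero, mwAux_nil]
  rfl

lemma Ladder.dual_eq_cons {α : Multisegment} (hL : Ladder α) {e : ℤ} (he : e ∈ ends α)
    (hub : ∀ Δ ∈ α, Δ.2 ≤ e) :
    dual α = (e - runLen (ends α) e + 1, e) ::ₘ dual (mwStep α e (runLen (ends α) e)) := by
  have hL' : Ladder (α.toList : Multisegment) := by rwa [Multiset.coe_toList]
  obtain ⟨l', hiter, hstep⟩ := mwIter_spec α.toList hL' (by rwa [Multiset.coe_toList])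
    fun Δ hΔ => hub Δ (Multiset.mem_toList.1 hΔ)
  rw [Multiset.coe_toList] at hiter hstep
  have hlt := deg_mwStep_lt hL.base_le_end he
  obtain ⟨n, hn⟩ : ∃ n, deg α = n + 1 := ⟨deg α - 1, by omega⟩
  rw [dual_eq_mwAux, hn, mwAux, hiter, ← Multiset.cons_coe, dual_eq_mwAux]
  congr 1
  exact mwAux_congr (hstep ▸ ladder_mwStep hL sub_runLen_notMem)
    (by rw [hstep, Multiset.coe_toList]) (by rw [hstep]; omega) (by rw [hstep])

lemma card_union_image_sub_one (s : Finset ℤ) :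
    (s ∪ s.image (· - 1)).card = s.card + (s.filter fun x => x - 1 ∉ s).card := by
  have himage : s.image (· - 1) \ s = (s.filter fun x => x - 1 ∉ s).image (· - 1) := by
    ext y
    simp only [Finset.mem_sdiff, Finset.mem_image, Finset.mem_filter]
    constructor
    · rintro ⟨⟨x, hx, rfl⟩, hy⟩
      exact ⟨x, ⟨hx, hy⟩, rfl⟩
    · rintro ⟨x, ⟨hx, hy⟩, rfl⟩
      exact ⟨⟨x, hx, rfl⟩, hy⟩
  rw [Finset.union_comm, ← Finset.card_sdiff_add_card, himage,
    Finset.card_image_of_injective _ (sub_left_injective), add_comm]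

lemma mem_supp {α : Multisegment} {x : ℤ} : x ∈ supp α ↔ ∃ Δ ∈ α, Δ.1 ≤ x ∧ x ≤ Δ.2 := by
  simp [supp]

noncomputable def thickSupp (α : Multisegment) : Finset ℤ := supp α ∪ (supp α).image (· - 1)

lemma Ssize_add_comp (α : Multisegment) : Ssize α + comp α = (thickSupp α).card :=
  (card_union_image_sub_one (supp α)).symm

lemma mem_thickSupp {α : Multisegment} (hα : ∀ Δ ∈ α, Δ.1 ≤ Δ.2) {x : ℤ} :
    x ∈ thickSupp α ↔ ∃ Δ ∈ α, Δ.1 - 1 ≤ x ∧ x ≤ Δ.2 := by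
  simp only [thickSupp, Finset.mem_union, Finset.mem_image, mem_supp]
  constructor
  · rintro (⟨Δ, hΔ, h₁, h₂⟩ | ⟨_, ⟨Δ, hΔ, h₁, h₂⟩, rfl⟩)
    · exact ⟨Δ, hΔ, by omega, h₂⟩
    · exact ⟨Δ, hΔ, by omega, by omega⟩
  · rintro ⟨Δ, hΔ, h₁, h₂⟩
    have := hα Δ hΔ
    rcases eq_or_lt_of_le h₁ with h | h
    · exact Or.inr ⟨x + 1, ⟨Δ, hΔ, by omega, by omega⟩, by ring⟩
    · exact Or.inl ⟨Δ, hΔ, by omega, h₂⟩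

@[simp] lemma thickSupp_zero : thickSupp 0 = ∅ := by
  simp [thickSupp, supp]

lemma Ladder.len_le_of_Icc_subset_ends {α : Multisegment} (hL : Ladder α) {Δ₀ Δ : Segment}
    (h₀ : Δ₀ ∈ α) (h : Δ ∈ α) (hle : Δ₀.2 ≤ Δ.2) (hrun : Finset.Icc Δ₀.2 Δ.2 ⊆ ends α) :
    Δ.2 - Δ.1 ≤ Δ₀.2 - Δ₀.1 := by
  obtain ⟨n, hn⟩ : ∃ n : ℕ, Δ.2 - Δ₀.2 = n := ⟨(Δ.2 - Δ₀.2).toNat, by omega⟩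
  induction n generalizing Δ with
  | zero => rw [hL.eq_of_end_eq h h₀ (by omega)]
  | succ n ih =>
    obtain ⟨Δ', h', he'⟩ := mem_ends.1 (hrun (Finset.mem_Icc.2
      (⟨by omega, by omega⟩ : Δ₀.2 ≤ Δ.2 - 1 ∧ Δ.2 - 1 ≤ Δ.2)))
    have hlt : Δ'.2 < Δ.2 := by omega
    have := ih h' (by omega) (hrun.trans' (Finset.Icc_subset_Icc_right hlt.le)) (by omega)
    have := hL.base_lt_base Δ' h' Δ h hlt
    omega

def points (α : Multisegment) : Multisegment := α.filter fun Δ => Δ.1 = Δ.2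

section TopRun

variable {α : Multisegment} {e : ℤ} {Δ : Segment}

lemma runLen_points_le : runLen (ends (points α)) e ≤ runLen (ends α) e :=
  runLen_mono (ends_mono (Multiset.filter_le _ _))

lemma Ladder.end_le_of_base_lt (hL : Ladder α) (hub : ∀ Δ ∈ α, Δ.2 ≤ e) (hΔ : Δ ∈ α)
    (hlt : Δ.1 < Δ.2) : Δ.2 ≤ e - runLen (ends (points α)) e := by
  by_contra! h
  obtain ⟨Δ', h', he'⟩ := mem_ends.1 (mem_of_sub_runLen_lt h (hub Δ hΔ))
  obtain ⟨h', hpt⟩ := Multiset.mem_filter.1 h'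
  rw [hL.eq_of_end_eq hΔ h' he'.symm] at hlt
  omega

lemma Ladder.sub_lt_end_of_base_eq (hL : Ladder α) (hΔ : Δ ∈ α)
    (hpt : Δ.1 = Δ.2) (hrun : e - runLen (ends α) e < Δ.2) :
    e - runLen (ends (points α)) e < Δ.2 := by
  have hends : ∀ y, Δ.2 ≤ y → y ≤ e → y ∈ ends α := fun y h₁ h₂ =>
    mem_of_sub_runLen_lt (by omega) h₂
  have hsub : Finset.Icc Δ.2 e ⊆ ends (points α) := by
    intro y hy
    obtain ⟨hy₁, hy₂⟩ := Finset.mem_Icc.1 hy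
    obtain ⟨Δ', h', rfl⟩ := mem_ends.1 (hends y hy₁ hy₂)
    have := hL.len_le_of_Icc_subset_ends hΔ h' hy₁ fun z hz => by
      obtain ⟨hz₁, hz₂⟩ := Finset.mem_Icc.1 hz
      exact hends z hz₁ (by omega)
    have := hL.base_le_end Δ' h'
    exact mem_ends.2 ⟨Δ', Multiset.mem_filter.2 ⟨h', by omega⟩, rfl⟩
  have := lt_runLen_of_Icc_subset hsub
  omega

lemma Ladder.card_mwStep_add (hL : Ladder α) (hub : ∀ Δ ∈ α, Δ.2 ≤ e) :
    Multiset.card (mwStep α e (runLen (ends α) e)) + runLen (ends (points α)) e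
      = Multiset.card α := by
  set t := runLen (ends α) e
  set v := runLen (ends (points α)) e
  have hvt : v ≤ t := runLen_points_le
  have hpts : ((α.filter fun Δ => e - t < Δ.2).filter fun Δ => ¬ Δ.1 < Δ.2)
      = α.filter fun Δ => e - v < Δ.2 := by
    rw [Multiset.filter_filter]
    refine Multiset.filter_congr fun Δ hΔ => ?_
    have := hL.base_le_end Δ hΔ
    constructor
    · rintro ⟨hpt, hrun⟩
      exact hL.sub_lt_end_of_base_eq hΔ (by omega) hrun
    · intro h
      exact ⟨mt (hL.end_le_of_base_lt hub hΔ) (by omega), by omega⟩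
  have hcard : Multiset.card (α.filter fun Δ => e - v < Δ.2) = v := by
    rw [card_filter_eq_card_filter_ends hL.nodup_ends]
    have : (ends α).filter (fun y => e - v < y) = Finset.Ioc (e - v) e := by
      ext y
      simp only [Finset.mem_filter, Finset.mem_Ioc]
      constructor
      · rintro ⟨hy, h⟩
        obtain ⟨Δ, hΔ, rfl⟩ := mem_ends.1 hy
        exact ⟨h, hub Δ hΔ⟩
      · rintro ⟨h₁, h₂⟩
        exact ⟨mem_of_sub_runLen_lt (by omega) h₂, h₁⟩
    rw [this, Int.card_Ioc]
    omega
  rw [mwStep, Multiset.card_add, Multiset.card_map, ← hcard, ← hpts, add_assoc,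
    ← Multiset.card_add, Multiset.filter_add_not, ← Multiset.card_add]
  conv_rhs => rw [← Multiset.filter_add_not (fun Δ : Segment => Δ.2 ≤ e - t) α]
  simp only [not_le]

lemma Icc_subset_thickSupp (hα : ∀ Δ ∈ α, Δ.1 ≤ Δ.2) (he : e ∈ ends α) :
    Finset.Icc (e - runLen (ends α) e) e ⊆ thickSupp α := by
  intro x hx
  obtain ⟨hx₁, hx₂⟩ := Finset.mem_Icc.1 hx
  have := runLen_pos he
  obtain ⟨Δ, hΔ, hΔe⟩ := mem_ends.1
    (mem_of_sub_runLen_lt (s := ends α) (x := e) (y := min (x + 1) e) (by omega) (by omega))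
  have := hα Δ hΔ
  exact (mem_thickSupp hα).2 ⟨Δ, hΔ, by omega, by omega⟩

lemma Ladder.thickSupp_mwStep (hL : Ladder α) (hub : ∀ Δ ∈ α, Δ.2 ≤ e) :
    thickSupp (mwStep α e (runLen (ends α) e))
      = thickSupp α \ Finset.Icc (e - runLen (ends (points α)) e) e := by
  set t := runLen (ends α) e
  set v := runLen (ends (points α)) e
  have hvt : v ≤ t := runLen_points_le
  have hstop : e - t ∉ ends α := sub_runLen_notMem
  ext x
  rw [Finset.mem_sdiff, mem_thickSupp (ladder_mwStep hL hstop).base_le_end,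
    mem_thickSupp hL.base_le_end, Finset.mem_Icc]
  constructor
  · rintro ⟨Δ, hΔ, hx₁, hx₂⟩
    obtain ⟨Δ', hΔ', hb, ⟨he', hle⟩ | ⟨he', hle, hne⟩⟩ := exists_of_mem_mwStep hΔ
    · have : Δ'.2 ≠ e - t := fun h => hstop (mem_ends.2 ⟨Δ', hΔ', h⟩)
      exact ⟨⟨Δ', hΔ', by omega, by omega⟩, by omega⟩
    · have := hL.end_le_of_base_lt hub hΔ' (by omega)
      exact ⟨⟨Δ', hΔ', by omega, by omega⟩, by omega⟩
  · rintro ⟨⟨Δ, hΔ, hx₁, hx₂⟩, hx⟩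
    have hxv : x < e - v := by have := hub Δ hΔ; omega
    by_cases hrun : Δ.2 ≤ e - t
    · exact ⟨Δ, mem_mwStep_of_le hΔ hrun, hx₁, hx₂⟩
    have hlt : Δ.1 < Δ.2 := by
      by_contra hpt
      have := hL.base_le_end Δ hΔ
      have := hL.sub_lt_end_of_base_eq (e := e) hΔ (by omega) (by omega)
      omega
    rcases lt_or_eq_of_le hx₂ with hx₂ | rfl
    · exact ⟨_, mem_mwStep_of_lt hΔ (by omega) hlt, hx₁, by simp only; omega⟩
    · -- `Δ.2` stays covered by the shortened segment ending at `Δ.2 + 1`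
      have hv := hL.end_le_of_base_lt hub hΔ hlt
      obtain ⟨Δ', hΔ', he'⟩ := mem_ends.1 (mem_of_sub_runLen_lt (s := ends α) (x := e)
        (y := Δ.2 + 1) (by omega) (by omega))
      have hlt' : Δ'.1 < Δ'.2 := by
        by_contra hpt
        have := hL.base_le_end Δ' hΔ'
        have := hL.sub_lt_end_of_base_eq (e := e) hΔ' (by omega) (by omega)
        omega
      have := hL.base_lt_base Δ hΔ Δ' hΔ' (by omega)
      exact ⟨_, mem_mwStep_of_lt hΔ' (by omega) hlt', by simp only; omega, by simp only; omega⟩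

end TopRun

theorem Ladder.card_dual_add_card {α : Multisegment} (hL : Ladder α) :
    Multiset.card (dual α) + Multiset.card α = (thickSupp α).card := by
  induction hn : deg α using Nat.strong_induction_on generalizing α with
  | _ n ih =>
  rcases eq_or_ne α 0 with rfl | h0
  · simp
  obtain ⟨e, he, hub⟩ := exists_max_end h0
  have hsub : Finset.Icc (e - runLen (ends (points α)) e) e ⊆ thickSupp α :=
    (Finset.Icc_subset_Icc_left (by have := runLen_points_le (α := α) (e := e); omega)).trans
      (Icc_subset_thickSupp hL.base_le_end he)
  have hthick := Finset.card_sdiff_add_card_eq_card hsub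
  rw [← hL.thickSupp_mwStep hub, Int.card_Icc] at hthick
  have := ih _ (hn ▸ deg_mwStep_lt hL.base_le_end he) (ladder_mwStep hL sub_runLen_notMem) rfl
  have := hL.card_mwStep_add hub
  rw [hL.dual_eq_cons he hub, Multiset.card_cons]
  omega

lemma mwStep_add_of_lt {α₁ α₂ : Multisegment} {e : ℤ} {t : ℕ} (h : ∀ Δ ∈ α₁, Δ.2 ≤ e - t) :
    mwStep (α₁ + α₂) e t = α₁ + mwStep α₂ e t := by
  have h₁ : α₁.filter (fun Δ => Δ.2 ≤ e - t) = α₁ := Multiset.filter_eq_self.2 h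
  have h₂ : α₁.filter (fun Δ => e - t < Δ.2) = 0 :=
    Multiset.filter_eq_nil.2 fun Δ hΔ hlt => by have := h Δ hΔ; omega
  simp only [mwStep, Multiset.filter_add, h₁, h₂, zero_add, add_assoc]

theorem Ladder.dual_add {α₁ α₂ : Multisegment} (hL : Ladder (α₁ + α₂))
    (hgap : ∀ Δ₁ ∈ α₁, ∀ Δ₂ ∈ α₂, Δ₁.2 + 1 < Δ₂.1) : dual (α₁ + α₂) = dual α₁ + dual α₂ := by
  induction hn : deg α₂ using Nat.strong_induction_on generalizing α₂ with
  | _ n ih =>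
  rcases eq_or_ne α₂ 0 with rfl | h0
  · simp
  have hL₂ : Ladder α₂ := hL.mono (Multiset.le_add_left _ _)
  obtain ⟨e, he, hub⟩ := exists_max_end h0
  set t := runLen (ends α₂) e
  have hlow : ∀ Δ ∈ α₁, Δ.2 < e - t := by
    have := runLen_pos he
    obtain ⟨Δ₂, h₂, he₂⟩ := mem_ends.1
      (mem_of_sub_runLen_lt (s := ends α₂) (x := e) (y := e - t + 1) (by omega) (by omega))
    have := hL₂.base_le_end Δ₂ h₂
    exact fun Δ hΔ => by have := hgap Δ hΔ Δ₂ h₂; omega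
  have hrun : runLen (ends (α₁ + α₂)) e = t := by
    rw [ends_add]
    exact runLen_union_of_lt fun y hy => by
      obtain ⟨Δ, hΔ, rfl⟩ := mem_ends.1 hy
      exact hlow Δ hΔ
  have hstep := mwStep_add_of_lt (α₂ := α₂) (e := e) fun Δ hΔ => (hlow Δ hΔ).le
  have hub' : ∀ Δ ∈ α₁ + α₂, Δ.2 ≤ e := by
    intro Δ hΔ
    rcases Multiset.mem_add.1 hΔ with h | h
    · have := hlow Δ h; omega
    · exact hub Δ h
  have hgap' : ∀ Δ₁ ∈ α₁, ∀ Δ₂ ∈ mwStep α₂ e t, Δ₁.2 + 1 < Δ₂.1 := fun Δ₁ h₁ Δ₂ h₂ => by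
    obtain ⟨Δ₂', h₂', hb, -⟩ := exists_of_mem_mwStep h₂
    exact hb ▸ hgap Δ₁ h₁ Δ₂' h₂'
  have hL' : Ladder (α₁ + mwStep α₂ e t) := hstep ▸ hrun ▸ ladder_mwStep hL sub_runLen_notMem
  rw [hL.dual_eq_cons (ends_mono (Multiset.le_add_left _ _) he) hub', hrun, hstep,
    ih _ (hn ▸ deg_mwStep_lt hL₂.base_le_end he) hL' hgap' rfl, hL₂.dual_eq_cons he hub,
    Multiset.add_cons]

def decompositionSizes (α : Multisegment) : Set ℕ :=
  {n | ∃ parts : Multiset Multisegment, Multiset.card parts = n ∧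
    (∀ γ ∈ parts, γ ≠ 0) ∧ parts.sum = α ∧ (parts.map dual).sum = dual α}

lemma card_le_card_sum {parts : Multiset Multisegment} (h : ∀ γ ∈ parts, γ ≠ 0) :
    Multiset.card parts ≤ Multiset.card parts.sum := by
  induction parts using Multiset.induction_on with
  | empty => simp
  | cons γ parts ih =>
    have := Multiset.card_pos.2 (h γ (Multiset.mem_cons_self _ _))
    have := ih fun γ' hγ' => h γ' (Multiset.mem_cons_of_mem hγ')
    rw [Multiset.sum_cons, Multiset.card_cons, Multiset.card_add]
    omega

lemma le_card_of_mem_decompositionSizes {α : Multisegment} {n : ℕ}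
    (h : n ∈ decompositionSizes α) : n ≤ Multiset.card α := by
  obtain ⟨parts, rfl, hne, rfl, -⟩ := h
  exact card_le_card_sum hne

lemma Cmax_le_card (α : Multisegment) : Cmax α ≤ Multiset.card α :=
  csSup_le' fun _ => le_card_of_mem_decompositionSizes

lemma two_le_Cmax {α₁ α₂ : Multisegment} (h₁ : α₁ ≠ 0) (h₂ : α₂ ≠ 0)
    (hdual : dual (α₁ + α₂) = dual α₁ + dual α₂) : 2 ≤ Cmax (α₁ + α₂) :=
  le_csSup ⟨_, fun _ => le_card_of_mem_decompositionSizes⟩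
    ⟨{α₁, α₂}, rfl, by simp [h₁, h₂], by simp, by simp [hdual]⟩

lemma comp_pos {α : Multisegment} (hα : IsMultisegment α) (h : α ≠ 0) : 0 < comp α := by
  obtain ⟨Δ, hΔ⟩ := Multiset.exists_mem_of_ne_zero h
  have hne : (supp α).Nonempty := ⟨Δ.1, mem_supp.2 ⟨Δ, hΔ, le_rfl, hα Δ hΔ⟩⟩
  refine Finset.card_pos.2 ⟨(supp α).min' hne, Finset.mem_filter.2 ⟨Finset.min'_mem _ _, ?_⟩⟩
  intro hmem
  have := (supp α).min'_le _ hmem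
  omega

lemma exists_gap_of_one_lt_comp {α : Multisegment} (h : 1 < comp α) :
    ∃ m, m - 1 ∉ supp α ∧ m ∈ supp α ∧ ∃ y ∈ supp α, y < m - 1 := by
  obtain ⟨a, ha, b, hb, hab⟩ := Finset.one_lt_card.1 h
  simp only [Finset.mem_filter] at ha hb
  rcases lt_or_gt_of_ne hab with hlt | hlt
  · exact ⟨b, hb.2, hb.1, a, ha.1, lt_of_le_of_ne (by omega) fun he => hb.2 (he ▸ ha.1)⟩
  · exact ⟨a, ha.2, ha.1, b, hb.1, lt_of_le_of_ne (by omega) fun he => ha.2 (he ▸ hb.1)⟩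

lemma Ladder.two_le_Cmax_of_one_lt_comp {α : Multisegment} (hL : Ladder α) (h : 1 < comp α) :
    2 ≤ Cmax α := by
  obtain ⟨m, hgap, hm, y, hy, hym⟩ := exists_gap_of_one_lt_comp h
  have hside : ∀ Δ ∈ α, Δ.2 < m - 1 ∨ m ≤ Δ.1 := fun Δ hΔ => by
    by_contra! hc
    exact hgap (mem_supp.2 ⟨Δ, hΔ, by omega, by omega⟩)
  rw [← Multiset.filter_add_not (fun Δ : Segment => Δ.2 < m) α] at hL ⊢
  refine two_le_Cmax ?_ ?_ (hL.dual_add fun Δ₁ h₁ Δ₂ h₂ => ?_)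
  · obtain ⟨Δ, hΔ, hy₁, hy₂⟩ := mem_supp.1 hy
    have := hside Δ hΔ
    exact ne_of_mem_of_not_mem' (Multiset.mem_filter.2 ⟨hΔ, by omega⟩) (Multiset.notMem_zero Δ)
  · obtain ⟨Δ, hΔ, hm₁, hm₂⟩ := mem_supp.1 hm
    exact ne_of_mem_of_not_mem' (Multiset.mem_filter.2 ⟨hΔ, by omega⟩) (Multiset.notMem_zero Δ)
  · have := hL.base_le_end Δ₁ (Multiset.mem_add.2 (Or.inl h₁))
    obtain ⟨h₁, hlt⟩ := Multiset.mem_filter.1 h₁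
    obtain ⟨h₂, hge⟩ := Multiset.mem_filter.1 h₂
    have := hside Δ₁ h₁
    have := hside Δ₂ h₂
    omega

/-- for an irreducible ladder multisegment,
`n_{α̃} + n_α = S_α + c_α` with `c_α = 1`. -/
theorem stmt12 (α : Multisegment) (hα : IsMultisegment α) (hlad : IsLadder α)
    (hirr : Cmax α = 1) :
    comp α = 1 ∧ nSeg (dual α) + nSeg α = Ssize α + comp α := by
  have hL := Ladder.of_isLadder hα hlad
  have h0 : α ≠ 0 := by
    rintro rfl
    have := Cmax_le_card 0
    simp_all
  have hcomp : comp α = 1 := le_antisymm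
    (not_lt.1 fun h => by have := hL.two_le_Cmax_of_one_lt_comp h; omega) (comp_pos hα h0)
  refine ⟨hcomp, ?_⟩
  rw [nSeg, nSeg, Ssize_add_comp]
  exact hL.card_dual_add_card
end
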